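/- Let A = [I;I] be the 2k×k stack of two identity matrices, E₁, E₂ symmetric positive definite, |r| < 1, and R = [[E₁, r√(E₁E₂)],[r(√(E₁E₂))ᵀ, E₂]]. Then AᵀR⁻¹A = (1-r²)⁻¹(S - rZ), where S = E₁⁻¹ + E₂⁻¹ and Z = √(E₁⁻¹E₂⁻¹) + (√(E₁⁻¹E₂⁻¹))ᵀ. -/

import Mathlib

/-!
With `S = √E₁` and `W = √(S E₂ S)`, the principal root of `E₁E₂` is `P = S W S⁻¹` and that of
`E₁⁻¹E₂⁻¹` is `S⁻¹ W⁻¹ S = (Pᵀ)⁻¹`. Moreover `Pᵀ E₁⁻¹ P = E₂`, and this single identity makes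
`(1 - r²)⁻¹ [[E₁⁻¹, -r (Pᵀ)⁻¹], [-r P⁻¹, E₂⁻¹]]` a right inverse of `R`, as one checks blockwise.
Finally `Aᵀ M A` is the sum of the four blocks of `M` for `A = [I; I]`.
-/

open Matrix

open scoped ComplexOrder in
/-- The positive semidefinite square root of a positive semidefinite matrix (as in the
older Mathlib, where this definition existed). -/
noncomputable def Matrix.PosSemidef.sqrt {n 𝕜 : Type*} [Fintype n] [DecidableEq n] [RCLike 𝕜]
    {A : Matrix n n 𝕜} (hA : A.PosSemidef) : Matrix n n 𝕜 :=
  (hA.1.eigenvectorUnitary : Matrix n n 𝕜) * diagonal ((↑) ∘ Real.sqrt ∘ hA.1.eigenvalues) *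
    (star hA.1.eigenvectorUnitary : Matrix n n 𝕜)

/-- The principal square root of `E₁ * E₂` for positive definite `E₁, E₂`:
`E₁^{1/2} · (E₁^{1/2} E₂ E₁^{1/2})^{1/2} · E₁^{-1/2}`. -/
noncomputable def principalSqrtMul {k : ℕ} {E₁ E₂ : Matrix (Fin k) (Fin k) ℝ}
    (h₁ : E₁.PosDef) (h₂ : E₂.PosDef) : Matrix (Fin k) (Fin k) ℝ :=
  h₁.posSemidef.sqrt *
    (h₂.posSemidef.mul_mul_conjTranspose_same h₁.posSemidef.sqrt).sqrt *
    h₁.posSemidef.sqrt⁻¹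

open scoped MatrixOrder ComplexOrder

namespace Matrix

variable {n : Type*} [Fintype n] [DecidableEq n]

section RCLike

variable {𝕜 : Type*} [RCLike 𝕜]

theorem PosSemidef.sqrt_eq_cfcSqrt {A : Matrix n n 𝕜} (hA : A.PosSemidef) :
    hA.sqrt = CFC.sqrt A := by
  rw [CFC.sqrt_eq_cfc, cfc_nnreal_eq_real _ A, hA.1.cfc_eq]
  simp only [IsHermitian.cfc, Unitary.conjStarAlgAut_apply, PosSemidef.sqrt]
  congr 3
  funext i
  simp [Real.coe_sqrt, Real.coe_toNNReal', max_eq_left (hA.eigenvalues_nonneg i)]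

theorem PosDef.posDef_cfcSqrt {A : Matrix n n 𝕜} (hA : A.PosDef) : (CFC.sqrt A).PosDef :=
  (IsStrictlyPositive.sqrt A hA.isStrictlyPositive).posDef

theorem PosDef.cfcSqrt_mul_mul_cfcSqrt {A B : Matrix n n 𝕜} (hA : A.PosDef) (hB : B.PosDef) :
    (CFC.sqrt A * B * CFC.sqrt A).PosDef := by
  have := (IsUnit.posDef_star_right_conjugate_iff hA.posDef_cfcSqrt.isUnit).mpr hB
  rwa [(CFC.sqrt_nonneg A).isSelfAdjoint.star_eq] at this

theorem cfcSqrt_nonsing_inv (A : Matrix n n 𝕜) : CFC.sqrt A⁻¹ = (CFC.sqrt A)⁻¹ := by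
  simp only [nonsing_inv_eq_ringInverse, CFC.sqrt_ringInverse]

end RCLike

theorem transpose_cfcSqrt (A : Matrix n n ℝ) : (CFC.sqrt A)ᵀ = CFC.sqrt A :=
  (isHermitian_iff_isSymm.mp (CFC.sqrt_nonneg A).posSemidef.1).eq

theorem inv_fromBlocks_of_transpose_mul_inv_mul_eq {K : Type*} [Field K]
    {E₁ E₂ P : Matrix n n K} (hE₁ : IsUnit E₁) (hP : IsUnit P) (hE₂ : Pᵀ * E₁⁻¹ * P = E₂)
    {r : K} (hr : r ^ 2 ≠ 1) :
    (fromBlocks E₁ (r • P) (r • Pᵀ) E₂)⁻¹ =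
      (1 - r ^ 2)⁻¹ • fromBlocks E₁⁻¹ (-(r • Pᵀ⁻¹)) (-(r • P⁻¹)) E₂⁻¹ := by
  have hE₂u : IsUnit E₂ :=
    hE₂ ▸ (((isUnit_transpose P).mpr hP).mul (isUnit_nonsing_inv_iff.mpr hE₁)).mul hP
  have : Invertible E₁ := hE₁.invertible
  have : Invertible E₂ := hE₂u.invertible
  have : Invertible P := hP.invertible
  have : Invertible Pᵀ := invertibleTranspose P
  have h₁₂ : E₁ * Pᵀ⁻¹ = P * E₂⁻¹ := by
    simp only [← hE₂, Matrix.mul_inv_rev, inv_inv_of_invertible, Matrix.mul_assoc,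
      mul_inv_cancel_left_of_invertible]
  have h₂₁ : E₂ * P⁻¹ = Pᵀ * E₁⁻¹ := by
    rw [← hE₂, mul_inv_cancel_right_of_invertible]
  refine inv_eq_right_inv ?_
  rw [Matrix.mul_smul, fromBlocks_multiply, inv_smul_eq_iff₀ (sub_ne_zero.mpr hr.symm),
    ← fromBlocks_one, fromBlocks_smul]
  simp only [Matrix.mul_neg, Matrix.smul_mul, Matrix.mul_smul, smul_smul, h₁₂, h₂₁,
    mul_inv_of_invertible, smul_zero]
  congr 1 <;> module

theorem of_sumElim_id_id_eq_fromRows_one_one {m R : Type*} [DecidableEq m] [Zero R] [One R] :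
    (of fun i j => if Sum.elim id id i = j then (1 : R) else 0 : Matrix (m ⊕ m) m R) =
      fromRows 1 1 := by
  ext (i | i) j <;> rfl

theorem fromCols_one_one_mul_fromBlocks_mul_fromRows_one_one {R : Type*} [Semiring R]
    (A B C D : Matrix n n R) :
    (fromCols (1 : Matrix n n R) 1 : Matrix n (n ⊕ n) R) * fromBlocks A B C D *
      (fromRows (1 : Matrix n n R) 1 : Matrix (n ⊕ n) n R) = A + B + C + D := by
  rw [Matrix.mul_assoc, fromBlocks_mul_fromRows, fromCols_mul_fromRows]
  simp only [Matrix.mul_one, Matrix.one_mul]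
  abel

end Matrix

section principalSqrtMul

variable {k : ℕ} {E₁ E₂ : Matrix (Fin k) (Fin k) ℝ} (h₁ : E₁.PosDef) (h₂ : E₂.PosDef)

theorem principalSqrtMul_eq_cfcSqrt :
    principalSqrtMul h₁ h₂ =
      CFC.sqrt E₁ * CFC.sqrt (CFC.sqrt E₁ * E₂ * CFC.sqrt E₁) * (CFC.sqrt E₁)⁻¹ := by
  simp only [principalSqrtMul, PosSemidef.sqrt_eq_cfcSqrt, conjTranspose_eq_transpose_of_trivial,
    transpose_cfcSqrt]

theorem isUnit_principalSqrtMul : IsUnit (principalSqrtMul h₁ h₂) := by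
  have hS := h₁.posDef_cfcSqrt.isUnit
  rw [principalSqrtMul_eq_cfcSqrt]
  exact (hS.mul (h₁.cfcSqrt_mul_mul_cfcSqrt h₂).posDef_cfcSqrt.isUnit).mul
    (isUnit_nonsing_inv_iff.mpr hS)

theorem principalSqrtMul_inv :
    principalSqrtMul h₁.inv h₂.inv = (principalSqrtMul h₁ h₂)ᵀ⁻¹ := by
  rw [principalSqrtMul_eq_cfcSqrt, principalSqrtMul_eq_cfcSqrt, cfcSqrt_nonsing_inv E₁]
  set S := CFC.sqrt E₁
  have hS : IsUnit S.det := (isUnit_iff_isUnit_det _).mp h₁.posDef_cfcSqrt.isUnit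
  have hinner : S⁻¹ * E₂⁻¹ * S⁻¹ = (S * E₂ * S)⁻¹ := by
    simp only [Matrix.mul_inv_rev, Matrix.mul_assoc]
  rw [hinner, cfcSqrt_nonsing_inv, nonsing_inv_nonsing_inv _ hS, transpose_mul, transpose_mul,
    transpose_nonsing_inv, transpose_cfcSqrt, transpose_cfcSqrt, Matrix.mul_inv_rev,
    Matrix.mul_inv_rev, nonsing_inv_nonsing_inv _ hS, Matrix.mul_assoc]

theorem transpose_principalSqrtMul_mul_inv_mul_principalSqrtMul :
    (principalSqrtMul h₁ h₂)ᵀ * E₁⁻¹ * principalSqrtMul h₁ h₂ = E₂ := by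
  rw [principalSqrtMul_eq_cfcSqrt]
  set S := CFC.sqrt E₁
  set W := CFC.sqrt (S * E₂ * S)
  have : Invertible S := h₁.posDef_cfcSqrt.isUnit.invertible
  have hST : Sᵀ = S := transpose_cfcSqrt E₁
  have hWT : Wᵀ = W := transpose_cfcSqrt _
  have hE₁ : E₁⁻¹ = S⁻¹ * S⁻¹ := by
    rw [← Matrix.mul_inv_rev, CFC.sqrt_mul_sqrt_self E₁ h₁.posSemidef.nonneg]
  have hW : W * W = S * E₂ * S :=
    CFC.sqrt_mul_sqrt_self _ (h₁.cfcSqrt_mul_mul_cfcSqrt h₂).posSemidef.nonneg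
  calc (S * W * S⁻¹)ᵀ * E₁⁻¹ * (S * W * S⁻¹)
      = S⁻¹ * (W * W) * S⁻¹ := by
        simp only [hE₁, transpose_mul, transpose_nonsing_inv, hST, hWT, Matrix.mul_assoc,
          inv_mul_cancel_left_of_invertible, mul_inv_cancel_left_of_invertible]
    _ = E₂ := by
        simp only [hW, Matrix.mul_assoc, inv_mul_cancel_left_of_invertible,
          mul_inv_of_invertible, Matrix.mul_one]

end principalSqrtMul

/-- For `A = [I; I]`, `R` the pairwise joint covariance with correlation `r`, `|r| < 1`,
one has `AᵀR⁻¹A = (1-r²)⁻¹(S - rZ)` where `S = E₁⁻¹ + E₂⁻¹` and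
`Z = √(E₁⁻¹E₂⁻¹) + (√(E₁⁻¹E₂⁻¹))ᵀ`. -/
theorem pairwise_normal_matrix (k : ℕ) (E₁ E₂ : Matrix (Fin k) (Fin k) ℝ)
    (h₁ : E₁.PosDef) (h₂ : E₂.PosDef) (r : ℝ) (hr : |r| < 1)
    (A : Matrix (Fin k ⊕ Fin k) (Fin k) ℝ)
    (hA : A = Matrix.of fun i j => if Sum.elim id id i = j then (1 : ℝ) else 0) :
    Aᵀ * (Matrix.fromBlocks E₁ (r • principalSqrtMul h₁ h₂)
        (r • (principalSqrtMul h₁ h₂)ᵀ) E₂)⁻¹ * A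
      = (1 - r ^ 2)⁻¹ •
        ((E₁⁻¹ + E₂⁻¹) - r • (principalSqrtMul h₁.inv h₂.inv
            + (principalSqrtMul h₁.inv h₂.inv)ᵀ)) := by
  have hr₂ : r ^ 2 ≠ 1 := ((sq_lt_one_iff_abs_lt_one r).mpr hr).ne
  rw [inv_fromBlocks_of_transpose_mul_inv_mul_eq h₁.isUnit (isUnit_principalSqrtMul h₁ h₂)
      (transpose_principalSqrtMul_mul_inv_mul_principalSqrtMul h₁ h₂) hr₂,
    principalSqrtMul_inv h₁ h₂, transpose_nonsing_inv, transpose_transpose,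
    hA, of_sumElim_id_id_eq_fromRows_one_one, transpose_fromRows, transpose_one,
    Matrix.mul_smul, Matrix.smul_mul, fromCols_one_one_mul_fromBlocks_mul_fromRows_one_one]
  module
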